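/- Let φ₀ ∈ (0, π/2) and φ ∈ (0, φ₀). Define ω_±(λ, z) = √(λ + κ + c_± z) (principal branch of the square root), where c_± > 0 are fixed constants. Then there exists c₀ > 0 such that |ω_±(λ, z)| ≥ c₀(√|λ| + √κ + c_± √|z|) for all λ in the open sector Σ_{π−φ₀} = {λ ∈ ℂ \ {0} : |arg λ| < π − φ₀}, all z in the sector Σ_φ = {z ∈ ℂ \ {0} : |arg z| < φ}, and all κ ∈ [1, ∞). -/

import Mathlib

/-!
Put `b = κ + c z`. Both `κ` and `c z` lie in the closed sector `|arg| ≤ φ`, which for `φ < π/2`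
is the convex cone `|Im w| ≤ tan φ · Re w`; hence so does `b`, and projecting onto the real axis
gives `‖b‖ ≥ cos φ · (κ + c‖z‖)`. The arguments of `λ` and `b` then differ by at most
`π - (φ₀ - φ)`, so the law of cosines gives `‖λ + b‖ ≥ sin ((φ₀ - φ)/2) · (‖λ‖ + ‖b‖)`. Taking
square roots, with `√x + √y + √u ≤ √3 · √(x + y + u)`, yields the bound.
-/

open Real

namespace Real

theorem abs_tan_le_tan_iff {α φ : ℝ} (hα : |α| < π / 2) (hφ₀ : 0 ≤ φ) (hφ : φ < π / 2) :
    |tan α| ≤ tan φ ↔ |α| ≤ φ := by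
  obtain ⟨hα₁, hα₂⟩ := abs_lt.mp hα
  have mem : ∀ {x}, -(π / 2) < x → x < π / 2 → x ∈ Set.Ioo (-(π / 2)) (π / 2) :=
    fun h₁ h₂ => ⟨h₁, h₂⟩
  have hα' := mem hα₁ hα₂
  rw [abs_le, abs_le, ← tan_neg, strictMonoOn_tan.le_iff_le (mem (by linarith) (by linarith)) hα',
    strictMonoOn_tan.le_iff_le hα' (mem (by linarith) hφ)]

end Real

namespace Complex

theorem abs_arg_le_iff_abs_im_le {φ : ℝ} (hφ₀ : 0 < φ) (hφ : φ < π / 2) (w : ℂ) :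
    |w.arg| ≤ φ ↔ |w.im| ≤ Real.tan φ * w.re := by
  rcases eq_or_ne w 0 with rfl | hw
  · simp [hφ₀.le]
  rcases lt_or_ge 0 w.re with hre | hre
  · rw [← Real.abs_tan_le_tan_iff (abs_arg_lt_pi_div_two_iff.mpr (.inl hre)) hφ₀.le hφ, tan_arg,
      abs_div, abs_of_pos hre, div_le_iff₀ hre]
  · have htan : 0 < Real.tan φ := Real.tan_pos_of_pos_of_lt_pi_div_two hφ₀ hφ
    refine iff_of_false (fun h => ?_) (fun h => hw ?_)
    · rcases abs_arg_lt_pi_div_two_iff.mp (h.trans_lt hφ) with hre' | rfl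
      exacts [hre.not_gt hre', hw rfl]
    · have hre0 : w.re = 0 := le_antisymm hre (by nlinarith [abs_nonneg w.im])
      exact Complex.ext hre0 (abs_nonpos_iff.mp (by simpa [hre0] using h))

theorem abs_arg_add_le {φ : ℝ} (hφ₀ : 0 < φ) (hφ : φ < π / 2) {a b : ℂ}
    (ha : |a.arg| ≤ φ) (hb : |b.arg| ≤ φ) : |(a + b).arg| ≤ φ := by
  rw [abs_arg_le_iff_abs_im_le hφ₀ hφ] at ha hb ⊢
  calc |(a + b).im| ≤ |a.im| + |b.im| := by simpa using abs_add_le a.im b.im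
    _ ≤ Real.tan φ * (a + b).re := by rw [add_re]; linarith

theorem norm_mul_cos_le_re {φ : ℝ} (hφ : φ ≤ π) {w : ℂ} (hw : |w.arg| ≤ φ) :
    ‖w‖ * Real.cos φ ≤ w.re := by
  rw [← norm_mul_cos_arg w, ← Real.cos_abs w.arg]
  exact mul_le_mul_of_nonneg_left
    (Real.cos_le_cos_of_nonneg_of_le_pi (abs_nonneg _) hφ hw) (norm_nonneg w)

theorem cos_mul_le_norm_add {φ : ℝ} (hφ : φ ≤ π) {a b : ℂ}
    (ha : |a.arg| ≤ φ) (hb : |b.arg| ≤ φ) : Real.cos φ * (‖a‖ + ‖b‖) ≤ ‖a + b‖ := by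
  have := norm_mul_cos_le_re hφ ha
  have := norm_mul_cos_le_re hφ hb
  calc Real.cos φ * (‖a‖ + ‖b‖) ≤ (a + b).re := by rw [add_re]; linarith
    _ ≤ ‖a + b‖ := re_le_norm _

theorem sq_norm_add (a b : ℂ) :
    ‖a + b‖ ^ 2 = ‖a‖ ^ 2 + ‖b‖ ^ 2 + 2 * ‖a‖ * ‖b‖ * Real.cos (a.arg - b.arg) := by
  rw [Complex.sq_norm, normSq_apply, add_re, add_im, Real.cos_sub, ← norm_mul_cos_arg a,
    ← norm_mul_sin_arg a, ← norm_mul_cos_arg b, ← norm_mul_sin_arg b]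
  linear_combination
    ‖a‖ ^ 2 * Real.sin_sq_add_cos_sq a.arg + ‖b‖ ^ 2 * Real.sin_sq_add_cos_sq b.arg

theorem sin_half_mul_le_norm_add {δ : ℝ} (hδ : 0 ≤ δ) {a b : ℂ}
    (h : |a.arg - b.arg| ≤ π - δ) : Real.sin (δ / 2) * (‖a‖ + ‖b‖) ≤ ‖a + b‖ := by
  have hcos : -Real.cos δ ≤ Real.cos (a.arg - b.arg) := by
    rw [← Real.cos_pi_sub, ← Real.cos_abs (a.arg - b.arg)]
    exact Real.cos_le_cos_of_nonneg_of_le_pi (abs_nonneg _) (by linarith) h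
  have hsin : Real.sin (δ / 2) ^ 2 = (1 - Real.cos δ) / 2 := by
    rw [Real.sin_sq, Real.cos_sq]; ring_nf
  refine le_trans (le_abs_self _) (abs_le_of_sq_le_sq ?_ (norm_nonneg _))
  rw [mul_pow, hsin, sq_norm_add]
  have hcosδ : 0 ≤ 1 + Real.cos δ := by linarith [Real.neg_one_le_cos δ]
  nlinarith [mul_nonneg (norm_nonneg a) (norm_nonneg b), mul_nonneg (sq_nonneg (‖a‖ - ‖b‖)) hcosδ]

theorem norm_cpow_one_div_two (w : ℂ) : ‖w ^ ((1 : ℂ) / 2)‖ = √‖w‖ := by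
  rw [sqrt_eq_rpow, ← norm_cpow_real]
  norm_num

theorem le_norm_add_ofReal_add_real_mul {δ φ c κ : ℝ} (hδ : 0 ≤ δ) (hφ₀ : 0 < φ)
    (hφ : φ < π / 2) (hc : 0 < c) (hκ : 0 ≤ κ) {l z : ℂ} (hl : |l.arg| + φ ≤ π - δ)
    (hz : |z.arg| ≤ φ) :
    Real.sin (δ / 2) * Real.cos φ * (‖l‖ + κ + c * ‖z‖) ≤ ‖l + (κ + c * z)‖ := by
  have hκ_arg : |(κ : ℂ).arg| ≤ φ := by
    rw [arg_ofReal_of_nonneg hκ, abs_zero]; exact hφ₀.le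
  have hcz_arg : |((c : ℂ) * z).arg| ≤ φ := by rwa [arg_real_mul z hc]
  set b : ℂ := κ + c * z
  have hb_arg : |b.arg| ≤ φ := abs_arg_add_le hφ₀ hφ hκ_arg hcz_arg
  have hb_norm : Real.cos φ * (κ + c * ‖z‖) ≤ ‖b‖ := by
    simpa [abs_of_pos hc, abs_of_nonneg hκ] using
      cos_mul_le_norm_add (by linarith) hκ_arg hcz_arg
  have hsin : 0 ≤ Real.sin (δ / 2) :=
    Real.sin_nonneg_of_nonneg_of_le_pi (by linarith) (by linarith [abs_nonneg l.arg])
  calc Real.sin (δ / 2) * Real.cos φ * (‖l‖ + κ + c * ‖z‖)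
      = Real.sin (δ / 2) * (Real.cos φ * ‖l‖ + Real.cos φ * (κ + c * ‖z‖)) := by ring
    _ ≤ Real.sin (δ / 2) * (‖l‖ + ‖b‖) := by
      gcongr
      exact mul_le_of_le_one_left (norm_nonneg l) (Real.cos_le_one φ)
    _ ≤ ‖l + b‖ := sin_half_mul_le_norm_add hδ (by linarith [abs_sub l.arg b.arg])

end Complex

theorem sqrt_add_sqrt_add_mul_sqrt_le {x y u c : ℝ} (hx : 0 ≤ x) (hy : 0 ≤ y) (hu : 0 ≤ u)
    (hc : 0 ≤ c) : √x + √y + c * √u ≤ √(3 * max 1 c) * √(x + y + c * u) := by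
  rw [← sqrt_mul (by positivity), le_sqrt (by positivity) (by positivity)]
  have hM₁ : 1 ≤ max 1 c := le_max_left _ _
  have hM : c ≤ max 1 c := le_max_right _ _
  have hsq : (√x + √y + c * √u) ^ 2 ≤ 3 * (x + y + c * (c * u)) := by
    have hcu : (c * √u) ^ 2 = c * (c * u) := by rw [mul_pow, sq_sqrt hu]; ring
    nlinarith [sq_sqrt hx, sq_sqrt hy, sq_nonneg (√x - √y), sq_nonneg (√x - c * √u),
      sq_nonneg (√y - c * √u)]
  nlinarith [mul_le_mul_of_nonneg_right hM (by positivity : 0 ≤ c * u)]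

theorem stmt1 (φ₀ φ c : ℝ) (hφ₀ : φ₀ ∈ Set.Ioo 0 (π / 2)) (hφ : φ ∈ Set.Ioo 0 φ₀)
    (hc : 0 < c) :
    ∃ c₀ > (0 : ℝ), ∀ (l z : ℂ) (κ : ℝ), 1 ≤ κ →
      l ≠ 0 → |l.arg| < π - φ₀ → z ≠ 0 → |z.arg| < φ →
      c₀ * (Real.sqrt (‖l‖) + Real.sqrt κ + c * Real.sqrt (‖z‖))
        ≤ ‖(l + (κ : ℂ) + (c : ℂ) * z) ^ ((1 : ℂ) / 2)‖ := by
  obtain ⟨-, hφ₀_lt⟩ := hφ₀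
  obtain ⟨hφ_pos, hφ_lt⟩ := hφ
  set ε := sin ((φ₀ - φ) / 2) * cos φ
  have hε : 0 < ε := mul_pos (sin_pos_of_pos_of_lt_pi (by linarith) (by linarith))
    (cos_pos_of_mem_Ioo ⟨by linarith, by linarith⟩)
  refine ⟨√ε / √(3 * max 1 c), by positivity, fun l z κ hκ _ hl_arg _ hz_arg => ?_⟩
  have hlower : ε * (‖l‖ + κ + c * ‖z‖) ≤ ‖l + (κ + c * z)‖ :=
    Complex.le_norm_add_ofReal_add_real_mul (by linarith) hφ_pos (by linarith) hc (by linarith)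
      (by linarith) hz_arg.le
  rw [Complex.norm_cpow_one_div_two, add_assoc l]
  calc √ε / √(3 * max 1 c) * (√‖l‖ + √κ + c * √‖z‖)
      ≤ √ε / √(3 * max 1 c) * (√(3 * max 1 c) * √(‖l‖ + κ + c * ‖z‖)) := by
        gcongr
        exact sqrt_add_sqrt_add_mul_sqrt_le (norm_nonneg _) (by linarith) (norm_nonneg _) hc.le
    _ = √(ε * (‖l‖ + κ + c * ‖z‖)) := by
        rw [sqrt_mul hε.le]; field_simp
    _ ≤ √‖l + (κ + c * z)‖ := sqrt_le_sqrt hlower
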